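/- Fix positive integers ℓ ≤ k ≤ n, a constant ρ ∈ [0,1], and a randomized single-sample online algorithm A with capacity k. Suppose that for every collection X = ((x_1^1,x_1^2),…,(x_n^1,x_n^2)) of n pairs of nonnegative reals, when c is uniform on {1,2}^n, s_i = x_i^{c_i}, v_i = x_i^{3−c_i}, and u is an independent uniform seed, it holds that E[TOP_ℓ(A(u,s,v); v)] ≥ ρ · E[TOP_ℓ(v)]. Then for every product distribution D = D_1 × ⋯ × D_n on nonnegative reals, with s ∼ D and v ∼ D independent and u an independent uniform seed, E[TOP_ℓ(A(u,s,v); v)] ≥ ρ · E[TOP_ℓ(v)]. -/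

import Mathlib

/-!
Draw the pairs `X i ~ Dᵢ ⊗ Dᵢ` independently. For every fixed coin vector `c`, splitting the
pairs by `c` into `(sampleVec X c, awardVec X c)` produces two independent draws from
`D = D₁ × ⋯ × Dₙ`. Hence both sides of the claim are the `X`-expectations of the averages over
`c` in the pair hypothesis, which holds for almost every `X` because the `Dᵢ` live on `[0, ∞)`.
-/

open MeasureTheory Finset

/-- `TOPval ℓ A v` is the maximum of `∑ i ∈ B, v i` over `B ⊆ A` with `|B| ≤ ℓ`. -/
noncomputable def TOPval {n : ℕ} (ℓ : ℕ) (A : Finset (Fin n)) (v : Fin n → ℝ) : ℝ :=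
  ((A.powerset.filter fun B => B.card ≤ ℓ).image fun B => ∑ i ∈ B, v i).max'
    (Finset.Nonempty.image
      ⟨∅, Finset.mem_filter.mpr ⟨Finset.empty_mem_powerset A, by simp⟩⟩ _)

/-- The sample vector determined by the pairs `X` and the coin flips `c`. -/
def sampleVec {n : ℕ} (X : Fin n → ℝ × ℝ) (c : Fin n → Bool) (i : Fin n) : ℝ :=
  if c i then (X i).1 else (X i).2

/-- The award vector determined by the pairs `X` and the coin flips `c`. -/
def awardVec {n : ℕ} (X : Fin n → ℝ × ℝ) (c : Fin n → Bool) (i : Fin n) : ℝ :=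
  if c i then (X i).2 else (X i).1

/-- A randomized single-sample online algorithm with capacity `k`: it receives a uniform
random seed `u ∈ [0,1]`, a sample vector `s`, and an online value vector `v`, outputs a set
of at most `k` indices, is online in `v` (the decision about index `i` depends only on
`v₁,…,vᵢ`), and is measurable. -/
structure SingleSampleAlg (n k : ℕ) where
  run : ℝ → (Fin n → ℝ) → (Fin n → ℝ) → Finset (Fin n)
  card_le : ∀ u s v, (run u s v).card ≤ k
  online : ∀ u s v w (i : Fin n), (∀ j : Fin n, j ≤ i → v j = w j) →
    (i ∈ run u s v ↔ i ∈ run u s w)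
  meas : ∀ i : Fin n,
    MeasurableSet {p : ℝ × (Fin n → ℝ) × (Fin n → ℝ) | i ∈ run p.1 p.2.1 p.2.2}

theorem integral_le_integral_of_ae_sum_comp_le {ι α β : Type*} [Fintype ι] [Nonempty ι]
    [MeasurableSpace α] [MeasurableSpace β] {μ : Measure α} {ν : Measure β} {Φ : ι → α ≃ᵐ β}
    (hΦ : ∀ c, MeasurePreserving (Φ c) μ ν) {f g : β → ℝ} (hf : Integrable f ν)
    (hg : Integrable g ν) (h : ∀ᵐ x ∂μ, ∑ c, f (Φ c x) ≤ ∑ c, g (Φ c x)) :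
    ∫ y, f y ∂ν ≤ ∫ y, g y ∂ν := by
  have integrable_comp {f : β → ℝ} (hf : Integrable f ν) (c : ι) :
      Integrable (fun x => f (Φ c x)) μ :=
    ((hΦ c).integrable_comp_emb (Φ c).measurableEmbedding).mpr hf
  have integral_sum_comp {f : β → ℝ} (hf : Integrable f ν) :
      ∫ x, ∑ c, f (Φ c x) ∂μ = Fintype.card ι • ∫ y, f y ∂ν := by
    rw [integral_finsetSum _ fun c _ => integrable_comp hf c]
    simp only [(hΦ _).integral_comp', sum_const, card_univ]
  have hsum := integral_mono_ae (integrable_finsetSum _ fun c _ => integrable_comp hf c)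
    (integrable_finsetSum _ fun c _ => integrable_comp hg c) h
  rw [integral_sum_comp hf, integral_sum_comp hg] at hsum
  exact le_of_nsmul_le_nsmul_right Fintype.card_ne_zero hsum

theorem ae_forall_pi_prod {ι α : Type*} [Fintype ι] [MeasurableSpace α] {μ : ι → Measure α}
    [∀ i, SigmaFinite (μ i)] {p : α → Prop} (h : ∀ i, ∀ᵐ x ∂μ i, p x) :
    ∀ᵐ X ∂Measure.pi (fun i => (μ i).prod (μ i)), ∀ i, p (X i).1 ∧ p (X i).2 :=
  ae_all_iff.mpr fun i =>
    (Measure.tendsto_eval_ae_ae (μ := fun i => (μ i).prod (μ i)) (i := i)).eventually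
      ((Measure.quasiMeasurePreserving_fst.ae (h i)).and
        (Measure.quasiMeasurePreserving_snd.ae (h i)))

theorem TOPval_nonneg {n : ℕ} (ℓ : ℕ) (A : Finset (Fin n)) (v : Fin n → ℝ) :
    0 ≤ TOPval ℓ A v :=
  le_max' _ _ (mem_image.mpr ⟨∅, mem_filter.mpr ⟨empty_mem_powerset A, by simp⟩, by simp⟩)

theorem TOPval_mono {n : ℕ} (ℓ : ℕ) {A B : Finset (Fin n)} (h : A ⊆ B) (v : Fin n → ℝ) :
    TOPval ℓ A v ≤ TOPval ℓ B v :=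
  max'_subset _ (image_subset_image (filter_subset_filter _ (powerset_mono.mpr h)))

theorem measurable_TOPval {n : ℕ} (ℓ : ℕ) (A : Finset (Fin n)) : Measurable (TOPval ℓ A) := by
  have hne : (A.powerset.filter fun B => B.card ≤ ℓ).Nonempty :=
    ⟨∅, mem_filter.mpr ⟨empty_mem_powerset A, by simp⟩⟩
  have hsup : TOPval ℓ A = (A.powerset.filter fun B => B.card ≤ ℓ).sup' hne
      fun B (v : Fin n → ℝ) => ∑ i ∈ B, v i := by
    funext v
    rw [TOPval, max'_eq_sup', sup'_image, Finset.sup'_apply]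
    rfl
  rw [hsup]
  exact measurable_sup' hne fun B _ => measurable_sum _ fun i _ => measurable_pi_apply i

namespace SingleSampleAlg

variable {n k : ℕ} (A : SingleSampleAlg n k)

theorem measurableSet_run_eq (S : Finset (Fin n)) :
    MeasurableSet {p : ℝ × (Fin n → ℝ) × (Fin n → ℝ) | A.run p.1 p.2.1 p.2.2 = S} := by
  have hset : {p : ℝ × (Fin n → ℝ) × (Fin n → ℝ) | A.run p.1 p.2.1 p.2.2 = S} =
      ⋂ i, {p | i ∈ A.run p.1 p.2.1 p.2.2 ↔ i ∈ S} := by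
    ext p
    simp [Finset.ext_iff]
  rw [hset]
  refine .iInter fun i => ?_
  by_cases hi : i ∈ S
  · simpa only [hi, iff_true] using A.meas i
  · simp only [hi, iff_false]
    exact (A.meas i).compl

theorem measurable_TOPval_run (ℓ : ℕ) :
    Measurable fun p : ℝ × (Fin n → ℝ) × (Fin n → ℝ) =>
      TOPval ℓ (A.run p.1 p.2.1 p.2.2) p.2.2 := by
  have hsum :
      (fun p : ℝ × (Fin n → ℝ) × (Fin n → ℝ) => TOPval ℓ (A.run p.1 p.2.1 p.2.2) p.2.2) =
      fun p => ∑ S, if A.run p.1 p.2.1 p.2.2 = S then TOPval ℓ S p.2.2 else 0 := by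
    funext p
    simp
  rw [hsum]
  exact measurable_sum _ fun S _ => Measurable.ite (A.measurableSet_run_eq S)
    ((measurable_TOPval ℓ S).comp (measurable_snd.comp measurable_snd)) measurable_const

end SingleSampleAlg

noncomputable def samplesAwardsEquiv (n : ℕ) (c : Fin n → Bool) :
    (Fin n → ℝ × ℝ) ≃ᵐ (Fin n → ℝ) × (Fin n → ℝ) :=
  (MeasurableEquiv.piCongrRight fun i =>
      if c i then MeasurableEquiv.refl (ℝ × ℝ) else MeasurableEquiv.prodComm).trans
    (MeasurableEquiv.arrowProdEquivProdArrow ℝ ℝ (Fin n))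

@[simp]
theorem samplesAwardsEquiv_apply {n : ℕ} (c : Fin n → Bool) (X : Fin n → ℝ × ℝ) :
    samplesAwardsEquiv n c X = (sampleVec X c, awardVec X c) := by
  ext i <;> by_cases hc : c i <;>
    simp [samplesAwardsEquiv, sampleVec, awardVec, hc, MeasurableEquiv.arrowProdEquivProdArrow,
      Equiv.arrowProdEquivProdArrow, MeasurableEquiv.piCongrRight, Equiv.piCongrRight,
      MeasurableEquiv.prodComm]

theorem measurePreserving_samplesAwardsEquiv {n : ℕ} (c : Fin n → Bool) (D : Fin n → Measure ℝ)
    [∀ i, SigmaFinite (D i)] :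
    MeasurePreserving (samplesAwardsEquiv n c) (Measure.pi fun i => (D i).prod (D i))
      ((Measure.pi D).prod (Measure.pi D)) := by
  refine (measurePreserving_arrowProdEquivProdArrow ℝ ℝ (Fin n) D D).comp
    (measurePreserving_pi _ _ fun i => ?_)
  by_cases hc : c i
  · simpa [hc] using MeasurePreserving.id ((D i).prod (D i))
  · simpa [hc, MeasurableEquiv.prodComm] using
      Measure.measurePreserving_swap (μ := D i) (ν := D i)

theorem single_sample_reduction_to_pairs_general (n k ℓ : ℕ)
    (ρ : ℝ) (A : SingleSampleAlg n k)
    (hpairs : ∀ X : Fin n → ℝ × ℝ, (∀ i, 0 ≤ (X i).1 ∧ 0 ≤ (X i).2) →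
      ρ * (((2 : ℝ) ^ n)⁻¹ * ∑ c : Fin n → Bool, TOPval ℓ Finset.univ (awardVec X c)) ≤
        ((2 : ℝ) ^ n)⁻¹ * ∑ c : Fin n → Bool,
          ∫ u in Set.Icc (0 : ℝ) 1,
            TOPval ℓ (A.run u (sampleVec X c) (awardVec X c)) (awardVec X c))
    (D : Fin n → Measure ℝ) [∀ i, IsProbabilityMeasure (D i)]
    (hDnonneg : ∀ i, D i {x : ℝ | x < 0} = 0) :
    ρ * ∫ p : ℝ × (Fin n → ℝ) × (Fin n → ℝ), TOPval ℓ Finset.univ p.2.2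
          ∂((volume.restrict (Set.Icc (0 : ℝ) 1)).prod ((Measure.pi D).prod (Measure.pi D))) ≤
      ∫ p : ℝ × (Fin n → ℝ) × (Fin n → ℝ), TOPval ℓ (A.run p.1 p.2.1 p.2.2) p.2.2
          ∂((volume.restrict (Set.Icc (0 : ℝ) 1)).prod ((Measure.pi D).prod (Measure.pi D))) := by
  have hseed : (volume.restrict (Set.Icc (0 : ℝ) 1)).real Set.univ = 1 := by
    simp [Measure.real, Real.volume_Icc]
  rw [integral_fun_snd (fun q : (Fin n → ℝ) × (Fin n → ℝ) => TOPval ℓ univ q.2), hseed,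
    one_smul]
  by_cases hB : Integrable (TOPval ℓ univ) (Measure.pi D)
  swap
  · -- A non-integrable benchmark has Bochner integral `0`.
    rw [integral_fun_snd (TOPval ℓ univ), integral_undef hB, smul_zero, mul_zero]
    exact integral_nonneg fun p => TOPval_nonneg _ _ _
  have hF : Integrable (fun p : ℝ × (Fin n → ℝ) × (Fin n → ℝ) =>
      TOPval ℓ (A.run p.1 p.2.1 p.2.2) p.2.2)
      ((volume.restrict (Set.Icc (0 : ℝ) 1)).prod ((Measure.pi D).prod (Measure.pi D))) :=
    ((hB.comp_snd _).comp_snd _).mono' (A.measurable_TOPval_run ℓ).aestronglyMeasurable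
      (ae_of_all _ fun p => by
        rw [Real.norm_eq_abs, abs_of_nonneg (TOPval_nonneg _ _ _)]
        exact TOPval_mono ℓ (subset_univ _) _)
  rw [integral_prod_symm _ hF, ← integral_const_mul]
  refine integral_le_integral_of_ae_sum_comp_le
    (fun c => measurePreserving_samplesAwardsEquiv c D)
    ((hB.comp_snd _).const_mul ρ) hF.integral_prod_right ?_
  have hD : ∀ i, ∀ᵐ x ∂D i, 0 ≤ x := fun i => ae_iff.mpr (by simpa using hDnonneg i)
  filter_upwards [ae_forall_pi_prod hD] with X hX
  have h2n : (0 : ℝ) < ((2 : ℝ) ^ n)⁻¹ := by positivity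
  simp only [samplesAwardsEquiv_apply]
  rw [← mul_sum, ← mul_le_mul_iff_of_pos_left h2n, mul_left_comm]
  exact hpairs X hX

/-- **Reduction lemma (Lemma 2.2 of Ezra–Feldman–Nehama).**
If a single-sample algorithm `A` with capacity `k` achieves a `ρ`-fraction of `TOP_ℓ` on every
pair distribution `D_X` (each of `n` pairs of nonnegative reals split uniformly into a sample
and an award), then it achieves a `ρ`-fraction of `TOP_ℓ` for every product distribution
`D = D₁ × ⋯ × Dₙ` on nonnegative reals, with `s, v ~ D` independent and a uniform seed. -/
theorem single_sample_reduction_to_pairs (n k ℓ : ℕ) (hℓ : 1 ≤ ℓ) (hℓk : ℓ ≤ k) (hkn : k ≤ n)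
    (ρ : ℝ) (hρ0 : 0 ≤ ρ) (hρ1 : ρ ≤ 1) (A : SingleSampleAlg n k)
    (hpairs : ∀ X : Fin n → ℝ × ℝ, (∀ i, 0 ≤ (X i).1 ∧ 0 ≤ (X i).2) →
      ρ * (((2 : ℝ) ^ n)⁻¹ * ∑ c : Fin n → Bool, TOPval ℓ Finset.univ (awardVec X c)) ≤
        ((2 : ℝ) ^ n)⁻¹ * ∑ c : Fin n → Bool,
          ∫ u in Set.Icc (0 : ℝ) 1,
            TOPval ℓ (A.run u (sampleVec X c) (awardVec X c)) (awardVec X c))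
    (D : Fin n → Measure ℝ) [∀ i, IsProbabilityMeasure (D i)]
    (hDnonneg : ∀ i, D i {x : ℝ | x < 0} = 0) :
    ρ * ∫ p : ℝ × (Fin n → ℝ) × (Fin n → ℝ), TOPval ℓ Finset.univ p.2.2
          ∂((volume.restrict (Set.Icc (0 : ℝ) 1)).prod ((Measure.pi D).prod (Measure.pi D))) ≤
      ∫ p : ℝ × (Fin n → ℝ) × (Fin n → ℝ), TOPval ℓ (A.run p.1 p.2.1 p.2.2) p.2.2
          ∂((volume.restrict (Set.Icc (0 : ℝ) 1)).prod ((Measure.pi D).prod (Measure.pi D))) :=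
  single_sample_reduction_to_pairs_general n k ℓ ρ A hpairs D hDnonneg
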